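/- arXiv:2406.01120 — 2 statements merged into one kernel-verified Lean document; each statement's English description precedes it below -/
import Mathlib

section
/- With the coefficients a defined by the recursion a_{0,...,0,1} = -1 and a_{i_1,...,i_n} = Σ_{j≥2, i_j≥1}(i_{j-1}+1) a_{i_1,...,i_{j-1}+1,i_j-1,...,i_{n-1}} - (n-1)[i_1≥1] a_{i_1-1,...,i_{n-1}} for i_n = 0: for all n ≥ 3, a_{n-3,0,1,0,...,0} = (-1)^n (n-1)! Σ_{1 ≤ p ≤ n-1} (p-1)/p. -/
/-!
For `i = (k, 0, 1, 0, …)` the recursion has just two terms: shifting the part `3` down to `2`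
gives `(k, 1, 0, …)`, and removing a part `1` gives `(k - 1, 0, 1, 0, …)`. The same shape of
recursion evaluates `(k, 1, 0, …)` and `(k, 0, …)` in closed form, by induction on `k`; the sum
`Σ (p - 1) / p` is then what the resulting first-order linear recurrence accumulates.
-/

open Finsupp

def SatisfiesCoeffRecursion (a : (ℕ →₀ ℕ) → ℤ) : Prop :=
  ∀ n : ℕ, 1 ≤ n → ∀ i : ℕ →₀ ℕ, i 0 = 0 →
    (∑ k ∈ i.support, k * i k) = n → i n = 0 →
    a i = (∑ j ∈ i.support.filter fun j => 2 ≤ j,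
            ((i (j - 1) : ℤ) + 1) * a (i + Finsupp.single (j - 1) 1 - Finsupp.single j 1))
      - ((n : ℤ) - 1) * (if 1 ≤ i 1 then a (i - Finsupp.single 1 1) else 0)

namespace SatisfiesCoeffRecursion

variable {a : (ℕ →₀ ℕ) → ℤ}

theorem single_one_succ_succ (hrec : SatisfiesCoeffRecursion a) (k : ℕ) :
    a (single 1 (k + 2)) = -((k : ℤ) + 1) * a (single 1 (k + 1)) := by
  have hsupp : (single 1 (k + 2) : ℕ →₀ ℕ).support = {1} := support_single _ (by omega)
  have hdown : single 1 (k + 2) - single 1 1 = (single 1 (k + 1) : ℕ →₀ ℕ) := by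
    rw [← single_tsub]; rfl
  rw [hrec (k + 2) (by omega) _ (by simp) (by rw [hsupp]; simp) (single_eq_of_ne (by omega)),
    hsupp, Finset.filter_singleton, if_neg (by omega), Finset.sum_empty, single_eq_same,
    if_pos (by omega), hdown]
  push_cast
  ring

theorem single_one_add_single (hrec : SatisfiesCoeffRecursion a) (k : ℕ) {j : ℕ} (hj : 2 ≤ j) :
    a (single 1 (k + 1) + single j 1) =
      (if j = 2 then (k : ℤ) + 2 else 1) * a (single 1 (k + 1) + single (j - 1) 1)
        - ((k + j : ℕ) : ℤ) * a (single 1 k + single j 1) := by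
  set i : ℕ →₀ ℕ := single 1 (k + 1) + single j 1
  have hsupp : i.support = {1, j} := support_single_add_single (by omega) (by omega) one_ne_zero
  have hweight : ∑ m ∈ i.support, m * i m = k + 1 + j := by
    rw [hsupp, Finset.sum_pair (by omega)]
    simp [i, show j ≠ 1 by omega, show 1 ≠ j by omega]
  have hfilter : i.support.filter (fun m => 2 ≤ m) = {j} := by
    rw [hsupp, Finset.filter_insert, if_neg (by omega), Finset.filter_singleton, if_pos hj]
  have hi1 : i 1 = k + 1 := by simp [i, show j ≠ 1 by omega]
  have hij : (i (j - 1) : ℤ) + 1 = if j = 2 then (k : ℤ) + 2 else 1 := by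
    split_ifs with h2
    · subst h2; simp [i]; ring
    · simp [i, show j - 1 ≠ 1 by omega, show j ≠ j - 1 by omega]
  have hshift : i + single (j - 1) 1 - single j 1 = single 1 (k + 1) + single (j - 1) 1 := by
    ext m; simp only [i, tsub_apply, Finsupp.add_apply, single_apply]; split_ifs <;> omega
  have hdown : i - single 1 1 = single 1 k + single j 1 := by
    ext m; simp only [i, tsub_apply, Finsupp.add_apply, single_apply]; split_ifs <;> omega
  have htop : i (k + 1 + j) = 0 := by
    simp only [i, Finsupp.add_apply, single_apply]; split_ifs <;> omega
  rw [hrec (k + 1 + j) (by omega) i (by simp [i, single_apply]; omega) hweight htop,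
    hfilter, Finset.sum_singleton, hij, hshift, hi1, if_pos (by omega : 1 ≤ k + 1), hdown]
  push_cast
  ring

open Nat in
theorem single_one (hrec : SatisfiesCoeffRecursion a) (h1 : a (single 1 1) = -1) (k : ℕ) :
    a (single 1 (k + 1)) = (-1) ^ (k + 1) * k ! := by
  induction k with
  | zero => simpa using h1
  | succ k ih =>
    rw [hrec.single_one_succ_succ, ih, factorial_succ]
    push_cast
    ring

open Nat in
theorem single_one_add_single_two (hrec : SatisfiesCoeffRecursion a) (h1 : a (single 1 1) = -1)
    (h2 : a (single 2 1) = -1) (k : ℕ) :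
    a (single 1 k + single 2 1) = (-1) ^ (k + 1) * (k + 1)! * (k + 1) := by
  induction k with
  | zero => simpa using h2
  | succ k ih =>
    rw [hrec.single_one_add_single k le_rfl, if_pos rfl, show 2 - 1 = 1 from rfl, ← single_add,
      hrec.single_one h1, ih, factorial_succ (k + 1)]
    push_cast
    ring

open Nat Finset in
theorem single_one_add_single_three (hrec : SatisfiesCoeffRecursion a) (h1 : a (single 1 1) = -1)
    (h2 : a (single 2 1) = -1) (h3 : a (single 3 1) = -1) (k : ℕ) :
    (a (single 1 k + single 3 1) : ℚ) =
      (-1) ^ (k + 3) * (k + 2)! * ∑ p ∈ Icc 1 (k + 2), ((p : ℚ) - 1) / p := by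
  induction k with
  | zero => norm_num [h3, sum_Icc_succ_top]
  | succ k ih =>
    rw [hrec.single_one_add_single k (by norm_num), if_neg (by norm_num), show 3 - 1 = 2 from rfl,
      hrec.single_one_add_single_two h1 h2]
    push_cast
    rw [ih, sum_Icc_succ_top (by omega : 1 ≤ k + 3), factorial_succ (k + 2)]
    push_cast
    field_simp
    ring

end SatisfiesCoeffRecursion

/-- With the coefficients `a` defined by the stated recursion: for all `n ≥ 3`,
`a_{n-3,0,1,0,…,0} = (-1)^n (n-1)! Σ_{1 ≤ p ≤ n-1} (p-1)/p`. -/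
theorem coeff_a_third
    (a : (ℕ →₀ ℕ) → ℤ)
    (hbase : ∀ n : ℕ, 1 ≤ n → a (Finsupp.single n 1) = -1)
    (hrec : ∀ n : ℕ, 1 ≤ n → ∀ i : ℕ →₀ ℕ, i 0 = 0 →
      (∑ k ∈ i.support, k * i k) = n → i n = 0 →
      a i = (∑ j ∈ i.support.filter fun j => 2 ≤ j,
              ((i (j - 1) : ℤ) + 1) * a (i + Finsupp.single (j - 1) 1 - Finsupp.single j 1))
        - ((n : ℤ) - 1) * (if 1 ≤ i 1 then a (i - Finsupp.single 1 1) else 0)) :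
    ∀ n : ℕ, 3 ≤ n →
      (a (Finsupp.single 1 (n - 3) + Finsupp.single 3 1) : ℚ)
        = (-1) ^ n * ((n - 1).factorial : ℚ)
            * ∑ p ∈ Finset.Icc 1 (n - 1), ((p : ℚ) - 1) / (p : ℚ) := by
  intro n hn
  obtain ⟨k, rfl⟩ : ∃ k, n = k + 3 := ⟨n - 3, by omega⟩
  exact SatisfiesCoeffRecursion.single_one_add_single_three hrec (hbase 1 le_rfl)
    (hbase 2 (by norm_num)) (hbase 3 (by norm_num)) k
end

section
/- With the coefficients a defined by the recursion a_{0,...,0,1} = -1 and a_{i_1,...,i_n} = Σ_{j≥2, i_j≥1}(i_{j-1}+1) a_{i_1,...,i_{j-1}+1,i_j-1,...,i_{n-1}} - (n-1)[i_1≥1] a_{i_1-1,...,i_{n-1}} for i_n = 0: for all n ≥ 4, a_{n-4,2,0,...,0} = (-1)^n (n-1)! Σ_{1 ≤ p ≤ n-1} (p-2)(p-1)/p. -/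
/-!
Only indices supported on `{1, 2}` occur. Writing `b k c = a_{k,c,0,…}`, the recursion there reads
`b k c = (k + 1) b (k + 1) (c - 1) - (k + 2c - 1) b (k - 1) c`, so it can be solved column by
column: `b (m + 1) 0 = (-1)^(m+1) m!`, then `b m 1 = (-1)^(m+1) (m + 1)! (m + 1)`, and finally
`b m 2` by induction on `m`, each step adding the term `p = m + 4` to the sum.
-/

open Finsupp

def CoeffRecursion (a : (ℕ →₀ ℕ) → ℤ) : Prop :=
  ∀ n : ℕ, 1 ≤ n → ∀ i : ℕ →₀ ℕ, i 0 = 0 →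
    (∑ k ∈ i.support, k * i k) = n → i n = 0 →
    a i = (∑ j ∈ i.support.filter fun j => 2 ≤ j,
            ((i (j - 1) : ℤ) + 1) * a (i + Finsupp.single (j - 1) 1 - Finsupp.single j 1))
      - ((n : ℤ) - 1) * (if 1 ≤ i 1 then a (i - Finsupp.single 1 1) else 0)

lemma single_one_add_single_two_apply (k c x : ℕ) :
    (single 1 k + single 2 c : ℕ →₀ ℕ) x = if x = 1 then k else if x = 2 then c else 0 := by
  simp only [Finsupp.coe_add, Pi.add_apply, single_apply]
  split_ifs <;> omega

lemma sum_mul_single_one_add_single_two (k c : ℕ) :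
    ∑ x ∈ (single 1 k + single 2 c : ℕ →₀ ℕ).support, x * (single 1 k + single 2 c : ℕ →₀ ℕ) x
      = k + 2 * c := by
  change (single 1 k + single 2 c).sum (fun x v => x * v) = _
  rw [sum_add_index' (by simp) (fun _ _ _ => Nat.mul_add _ _ _), sum_single_index (by simp),
    sum_single_index (by simp), one_mul]

namespace CoeffRecursion

variable {a : (ℕ →₀ ℕ) → ℤ}

/-- `2 ≤ k + c` is exactly the condition `i n = 0` at the weight `n = k + 2 * c`. -/
theorem rec_single_one_add_single_two (hrec : CoeffRecursion a) {k c : ℕ} (hkc : 2 ≤ k + c) :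
    a (single 1 k + single 2 c) =
      (if 1 ≤ c then ((k : ℤ) + 1) * a (single 1 (k + 1) + single 2 (c - 1)) else 0)
        - ((k : ℤ) + 2 * c - 1) * (if 1 ≤ k then a (single 1 (k - 1) + single 2 c) else 0) := by
  have hi := single_one_add_single_two_apply k c
  have hfilter : (single 1 k + single 2 c).support.filter (2 ≤ ·) = if 1 ≤ c then {2} else ∅ := by
    ext x
    simp only [Finset.mem_filter, Finsupp.mem_support_iff, hi]
    split_ifs <;> simp <;> omega
  have hraise : single 1 k + single 2 c + single 1 1 - single 2 1
      = (single 1 (k + 1) + single 2 (c - 1) : ℕ →₀ ℕ) := by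
    ext x
    simp only [coe_tsub, Finsupp.coe_add, Pi.add_apply, Pi.sub_apply, single_apply]
    split_ifs <;> omega
  have hlower : single 1 k + single 2 c - single 1 1
      = (single 1 (k - 1) + single 2 c : ℕ →₀ ℕ) := by
    ext x
    simp only [coe_tsub, Finsupp.coe_add, Pi.add_apply, Pi.sub_apply, single_apply]
    split_ifs <;> omega
  rw [hrec (k + 2 * c) (by omega) _ (by simp [hi]) (sum_mul_single_one_add_single_two k c)
    (by rw [hi]; split_ifs <;> omega), hfilter, hi 1, if_pos rfl, hlower]
  split_ifs <;> simp [hi, hraise]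

theorem apply_single_one (hrec : CoeffRecursion a) (h₁ : a (single 1 1) = -1) (m : ℕ) :
    a (single 1 (m + 1)) = (-1) ^ (m + 1) * m.factorial := by
  induction m with
  | zero => simpa using h₁
  | succ m ih =>
    have h := hrec.rec_single_one_add_single_two (k := m + 2) (c := 0) (by omega)
    -- `single_add` would split `single 1 (m + 2)` and hide the shape of `ih`
    norm_num [-single_add, ih] at h
    rw [h, Nat.factorial_succ]
    push_cast
    ring

theorem apply_single_one_add_single_two_one (hrec : CoeffRecursion a) (h₁ : a (single 1 1) = -1)
    (h₂ : a (single 2 1) = -1) (m : ℕ) :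
    a (single 1 m + single 2 1) = (-1) ^ (m + 1) * (m + 1).factorial * (m + 1) := by
  induction m with
  | zero => simpa using h₂
  | succ m ih =>
    have h := hrec.rec_single_one_add_single_two (k := m + 1) (c := 1) (by omega)
    norm_num [-single_add, ih, hrec.apply_single_one h₁] at h
    rw [h, Nat.factorial_succ (m + 1)]
    push_cast
    ring

theorem apply_single_one_add_single_two_two (hrec : CoeffRecursion a) (h₁ : a (single 1 1) = -1)
    (h₂ : a (single 2 1) = -1) (m : ℕ) :
    (a (single 1 m + single 2 2) : ℚ) = (-1) ^ m * (m + 3).factorial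
      * ∑ p ∈ Finset.Icc 1 (m + 3), ((p : ℚ) - 2) * ((p : ℚ) - 1) / (p : ℚ) := by
  induction m with
  | zero =>
    have h := hrec.rec_single_one_add_single_two (k := 0) (c := 2) (by omega)
    norm_num [-single_add, hrec.apply_single_one_add_single_two_one h₁ h₂] at h
    rw [single_zero, zero_add, h]
    norm_num [Finset.sum_Icc_succ_top, Nat.factorial]
  | succ m ih =>
    have h := hrec.rec_single_one_add_single_two (k := m + 1) (c := 2) (by omega)
    norm_num [-single_add, hrec.apply_single_one_add_single_two_one h₁ h₂] at h
    rw [h, Finset.sum_Icc_succ_top (by omega), Nat.factorial_succ (m + 3)]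
    push_cast
    rw [ih]
    field_simp
    ring

end CoeffRecursion

/-- With the coefficients `a` defined by the stated recursion: for all `n ≥ 4`,
`a_{n-4,2,0,…,0} = (-1)^n (n-1)! Σ_{1 ≤ p ≤ n-1} (p-2)(p-1)/p`. -/
theorem coeff_a_second_squared
    (a : (ℕ →₀ ℕ) → ℤ)
    (hbase : ∀ n : ℕ, 1 ≤ n → a (Finsupp.single n 1) = -1)
    (hrec : ∀ n : ℕ, 1 ≤ n → ∀ i : ℕ →₀ ℕ, i 0 = 0 →
      (∑ k ∈ i.support, k * i k) = n → i n = 0 →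
      a i = (∑ j ∈ i.support.filter fun j => 2 ≤ j,
              ((i (j - 1) : ℤ) + 1) * a (i + Finsupp.single (j - 1) 1 - Finsupp.single j 1))
        - ((n : ℤ) - 1) * (if 1 ≤ i 1 then a (i - Finsupp.single 1 1) else 0)) :
    ∀ n : ℕ, 4 ≤ n →
      (a (Finsupp.single 1 (n - 4) + Finsupp.single 2 2) : ℚ)
        = (-1) ^ n * ((n - 1).factorial : ℚ)
            * ∑ p ∈ Finset.Icc 1 (n - 1), ((p : ℚ) - 2) * ((p : ℚ) - 1) / (p : ℚ) := by
  intro n hn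
  obtain ⟨m, rfl⟩ : ∃ m, n = m + 4 := ⟨n - 4, by omega⟩
  rw [Nat.add_sub_cancel, show m + 4 - 1 = m + 3 from rfl, pow_add, Even.neg_one_pow ⟨2, rfl⟩,
    mul_one]
  exact CoeffRecursion.apply_single_one_add_single_two_two hrec (hbase 1 le_rfl)
    (hbase 2 (by norm_num)) m
end
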